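/- Let β ∈ ℂ, C₀ > 0 and p ≥ 1/2 be real, and let (Z_j)_{j≥1} be complex-valued square-integrable random variables on a probability space satisfying E Z_j = β and E|Z_j − β|² ≤ C₀ for all j, and |E[(Z_j − β)·conj(Z_k − β)]| ≤ C₀·|j − k|^{−p} for all j ≠ k. Then there exists a constant C > 0 such that for every integer N ≥ 1, E| N^{−1}·Σ_{j=1}^N Z_j − β |² ≤ C · N^{−1/2}. -/

import Mathlib

/-!
Write `W j = Z j - β`. Then `‖N⁻¹ ∑ Z j - β‖² = N⁻² ‖∑ W j‖²`, and expanding the square,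
`E‖∑ W j‖² = ∑_{j,k} Re E[W j · conj (W k)]`. Each diagonal term is at most `C₀`, and each row
of off-diagonal terms is at most `C₀ ∑_{k ≠ j} |j - k|^{-1/2} ≤ 4 C₀ √N`, because every distance
`d ≤ N` occurs at most twice and `∑_{d ≤ N} d^{-1/2} ≤ 2 √N`. Hence the expectation is at most
`N⁻² · N · 5 C₀ √N = 5 C₀ N^{-1/2}`.
-/

open MeasureTheory ProbabilityTheory Finset

lemma sum_comp_le_sum_of_injOn {ι κ M : Type*} [AddCommMonoid M] [PartialOrder M]
    [IsOrderedAddMonoid M] {s : Finset ι} {t : Finset κ} {g : ι → κ} {f : κ → M}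
    (hf : ∀ x ∈ t, 0 ≤ f x) (hg : Set.InjOn g s) (hst : Set.MapsTo g s t) :
    ∑ i ∈ s, f (g i) ≤ ∑ x ∈ t, f x := by
  classical
  rw [← sum_image hg]
  exact sum_le_sum_of_subset_of_nonneg (image_subset_iff.2 hst) fun x hx _ ↦ hf x hx

/-- Each distance `d` is realised by at most two indices `k`, one on each side of `j`. -/
lemma sum_erase_natAbs_sub_le {M : Type*} [AddCommMonoid M] [PartialOrder M]
    [IsOrderedAddMonoid M] {N j : ℕ} {f : ℕ → M} (hf : ∀ d ∈ Icc 1 N, 0 ≤ f d) (hj : j ≤ N) :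
    ∑ k ∈ (Icc 1 N).erase j, f (j - k : ℤ).natAbs ≤ 2 • ∑ d ∈ Icc 1 N, f d := by
  rw [← sum_filter_add_sum_filter_not _ (· < j), two_nsmul]
  gcongr <;> refine sum_comp_le_sum_of_injOn hf ?_ ?_ <;>
    · intro k hk
      simp only [coe_filter, mem_erase, mem_Icc, Set.mem_ofPred_eq, coe_Icc, Set.mem_Icc] at *
      omega

lemma rpow_neg_half_le_two_mul_sqrt_sub (n : ℕ) :
    ((n + 1 : ℕ) : ℝ) ^ (-(1 / 2) : ℝ) ≤ 2 * (√(n + 1) - √n) := by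
  set a := √(n + 1 : ℝ)
  set b := √(n : ℝ)
  have ha : a ^ 2 = n + 1 := Real.sq_sqrt (by positivity)
  have hb : b ^ 2 = n := Real.sq_sqrt (by positivity)
  rw [Real.rpow_neg (by positivity), ← Real.sqrt_eq_rpow, Nat.cast_succ,
    inv_le_iff_one_le_mul₀ (Real.sqrt_pos.2 (by positivity))]
  -- `a * (2 * (a - b)) - 1 = (a - b) ^ 2`
  nlinarith [sq_nonneg (a - b)]

lemma sum_Icc_rpow_neg_half_le (N : ℕ) :
    ∑ d ∈ Icc 1 N, (d : ℝ) ^ (-(1 / 2) : ℝ) ≤ 2 * √N := by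
  induction N with
  | zero => simp
  | succ n ih =>
    rw [sum_Icc_succ_top (by omega)]
    have := rpow_neg_half_le_two_mul_sqrt_sub n
    push_cast at this ⊢
    linarith

lemma one_le_abs_natCast_sub_natCast {j k : ℕ} (h : j ≠ k) : (1 : ℝ) ≤ |(j : ℝ) - k| := by
  have : (1 : ℤ) ≤ |(j : ℤ) - k| := Int.one_le_abs (sub_ne_zero.2 (by exact_mod_cast h))
  exact_mod_cast this

lemma sum_erase_abs_sub_rpow_neg_le {N j : ℕ} {p : ℝ} (hp : 1 / 2 ≤ p) (hj : j ≤ N) :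
    ∑ k ∈ (Icc 1 N).erase j, |(j : ℝ) - k| ^ (-p) ≤ 4 * √N := by
  have key := sum_erase_natAbs_sub_le (f := fun d : ℕ ↦ (d : ℝ) ^ (-(1 / 2) : ℝ))
    (fun d _ ↦ by positivity) hj
  simp only [Nat.cast_natAbs, Int.cast_abs, Int.cast_sub, Int.cast_natCast, two_nsmul] at key
  calc ∑ k ∈ (Icc 1 N).erase j, |(j : ℝ) - k| ^ (-p)
      ≤ ∑ k ∈ (Icc 1 N).erase j, |(j : ℝ) - k| ^ (-(1 / 2) : ℝ) := by
        refine sum_le_sum fun k hk ↦ ?_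
        gcongr
        exact one_le_abs_natCast_sub_natCast (mem_erase.1 hk).1.symm
    _ ≤ 4 * √N := by linarith [sum_Icc_rpow_neg_half_le N]

lemma inv_card_mul_sum_sub {𝕜 ι : Type*} [Field 𝕜] [CharZero 𝕜] {s : Finset ι}
    (hs : s.Nonempty) (z : ι → 𝕜) (c : 𝕜) :
    (#s : 𝕜)⁻¹ * ∑ i ∈ s, z i - c = (#s : 𝕜)⁻¹ * ∑ i ∈ s, (z i - c) := by
  rw [sum_sub_distrib, sum_const, nsmul_eq_mul, mul_sub, ← mul_assoc,
    inv_mul_cancel₀ (by exact_mod_cast hs.card_pos.ne'), one_mul]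

lemma sum_sum_re_le_card_mul {𝕜 ι : Type*} [RCLike 𝕜] [DecidableEq ι] {s : Finset ι}
    {a : ι → ι → 𝕜} {A B : ℝ} (hdiag : ∀ j ∈ s, RCLike.re (a j j) ≤ A)
    (hoff : ∀ j ∈ s, ∑ k ∈ s.erase j, ‖a j k‖ ≤ B) :
    ∑ j ∈ s, ∑ k ∈ s, RCLike.re (a j k) ≤ #s * (A + B) := by
  rw [← nsmul_eq_mul, ← sum_const]
  refine sum_le_sum fun j hj ↦ ?_
  rw [← add_sum_erase _ _ hj]
  exact add_le_add (hdiag j hj) ((sum_le_sum fun k _ ↦ RCLike.re_le_norm _).trans (hoff j hj))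

section SquareIntegrable

variable {Ω 𝕜 ι : Type*} [MeasurableSpace Ω] {μ : Measure Ω} [RCLike 𝕜]

lemma MeasureTheory.MemLp.integrable_mul_star {f g : Ω → 𝕜} (hf : MemLp f 2 μ)
    (hg : MemLp g 2 μ) : Integrable (fun ω ↦ f ω * star (g ω)) μ :=
  hf.integrable_mul hg.star

lemma integral_norm_sum_sq (s : Finset ι) {W : ι → Ω → 𝕜} (hW : ∀ i ∈ s, MemLp (W i) 2 μ) :
    ∫ ω, ‖∑ i ∈ s, W i ω‖ ^ 2 ∂μ =
      ∑ i ∈ s, ∑ j ∈ s, RCLike.re (∫ ω, W i ω * star (W j ω) ∂μ) := by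
  have hsq : ∀ ω, ((‖∑ i ∈ s, W i ω‖ ^ 2 : ℝ) : 𝕜) = ∑ i ∈ s, ∑ j ∈ s, W i ω * star (W j ω) := by
    intro ω
    rw [RCLike.ofReal_pow, ← RCLike.mul_conj, map_sum, sum_mul_sum, RCLike.star_def]
  have hint : ∀ i ∈ s, ∀ j ∈ s, Integrable (fun ω ↦ W i ω * star (W j ω)) μ :=
    fun i hi j hj ↦ (hW i hi).integrable_mul_star (hW j hj)
  calc ∫ ω, ‖∑ i ∈ s, W i ω‖ ^ 2 ∂μ
      = RCLike.re (∫ ω, ((‖∑ i ∈ s, W i ω‖ ^ 2 : ℝ) : 𝕜) ∂μ) := by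
        rw [integral_ofReal, RCLike.ofReal_re]
    _ = ∑ i ∈ s, ∑ j ∈ s, RCLike.re (∫ ω, W i ω * star (W j ω) ∂μ) := by
        simp_rw [hsq]
        rw [integral_finsetSum _ fun i hi ↦ integrable_finsetSum _ (hint i hi), map_sum]
        refine sum_congr rfl fun i hi ↦ ?_
        rw [integral_finsetSum _ (hint i hi), map_sum]

lemma re_integral_mul_star_self {f : Ω → 𝕜} (hf : MemLp f 2 μ) :
    RCLike.re (∫ ω, f ω * star (f ω) ∂μ) = ∫ ω, ‖f ω‖ ^ 2 ∂μ := by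
  simpa using (integral_norm_sum_sq {()} (W := fun _ ↦ f) fun _ _ ↦ hf).symm

end SquareIntegrable

theorem variance_of_average_decay_general {Ω : Type*} [MeasureSpace Ω]
    [IsProbabilityMeasure (ℙ : Measure Ω)] (β : ℂ) (C₀ p : ℝ)
    (hC₀ : 0 < C₀) (hp : 1 / 2 ≤ p) (Z : ℕ → Ω → ℂ)
    (hmem : ∀ j : ℕ, 1 ≤ j → MemLp (Z j) 2 ℙ)
    (hvar : ∀ j : ℕ, 1 ≤ j → ∫ ω, ‖Z j ω - β‖ ^ 2 ∂ℙ ≤ C₀)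
    (hcov : ∀ j k : ℕ, 1 ≤ j → 1 ≤ k → j ≠ k →
      ‖∫ ω, (Z j ω - β) * star (Z k ω - β) ∂ℙ‖ ≤ C₀ * |(j : ℝ) - (k : ℝ)| ^ (-p)) :
    ∃ C > 0, ∀ N : ℕ, 1 ≤ N →
      ∫ ω, ‖(N : ℂ)⁻¹ * (∑ j ∈ Finset.Icc 1 N, Z j ω) - β‖ ^ 2 ∂ℙ
        ≤ C * (N : ℝ) ^ (-(1 / 2) : ℝ) := by
  refine ⟨5 * C₀, by positivity, fun N hN ↦ ?_⟩
  have hN0 : (0 : ℝ) < N := by exact_mod_cast hN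
  set W : ℕ → Ω → ℂ := fun j ω ↦ Z j ω - β
  have hW : ∀ j ∈ Icc 1 N, MemLp (W j) 2 ℙ :=
    fun j hj ↦ (hmem j (mem_Icc.1 hj).1).sub (memLp_const β)
  have hdiag : ∀ j ∈ Icc 1 N, RCLike.re (∫ ω, W j ω * star (W j ω)) ≤ C₀ :=
    fun j hj ↦ (re_integral_mul_star_self (hW j hj)).trans_le (hvar j (mem_Icc.1 hj).1)
  have hoff : ∀ j ∈ Icc 1 N,
      ∑ k ∈ (Icc 1 N).erase j, ‖∫ ω, W j ω * star (W k ω)‖ ≤ C₀ * (4 * √N) := by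
    intro j hj
    refine (sum_le_sum fun k hk ↦ hcov j k (mem_Icc.1 hj).1 (mem_Icc.1 (mem_erase.1 hk).2).1
      (mem_erase.1 hk).1.symm).trans ?_
    rw [← mul_sum]
    gcongr
    exact sum_erase_abs_sub_rpow_neg_le hp (mem_Icc.1 hj).2
  have hcard : (#(Icc 1 N) : ℂ) = N := by simp
  calc ∫ ω, ‖(N : ℂ)⁻¹ * (∑ j ∈ Icc 1 N, Z j ω) - β‖ ^ 2
      = (N : ℝ)⁻¹ ^ 2 * ∑ j ∈ Icc 1 N, ∑ k ∈ Icc 1 N, RCLike.re (∫ ω, W j ω * star (W k ω)) := by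
        simp_rw [← hcard, inv_card_mul_sum_sub (nonempty_Icc.2 hN), hcard, norm_mul, mul_pow,
          norm_inv, Complex.norm_natCast]
        rw [integral_const_mul, integral_norm_sum_sq _ hW]
    _ ≤ (N : ℝ)⁻¹ ^ 2 * (N * (C₀ + C₀ * (4 * √N))) := by
        gcongr
        simpa using sum_sum_re_le_card_mul hdiag hoff
    _ ≤ (N : ℝ)⁻¹ ^ 2 * (N * (5 * C₀ * √N)) := by
        gcongr
        nlinarith [Real.one_le_sqrt.2 (by exact_mod_cast hN : (1 : ℝ) ≤ N)]
    _ = 5 * C₀ * (N : ℝ) ^ (-(1 / 2) : ℝ) := by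
        rw [Real.rpow_neg hN0.le, ← Real.sqrt_eq_rpow]
        field_simp
        rw [Real.sq_sqrt hN0.le]

theorem variance_of_average_decay {Ω : Type*} [MeasureSpace Ω]
    [IsProbabilityMeasure (ℙ : Measure Ω)] (β : ℂ) (C₀ p : ℝ)
    (hC₀ : 0 < C₀) (hp : 1 / 2 ≤ p) (Z : ℕ → Ω → ℂ)
    (hmem : ∀ j : ℕ, 1 ≤ j → MemLp (Z j) 2 ℙ)
    (hmean : ∀ j : ℕ, 1 ≤ j → ∫ ω, Z j ω ∂ℙ = β)
    (hvar : ∀ j : ℕ, 1 ≤ j → ∫ ω, ‖Z j ω - β‖ ^ 2 ∂ℙ ≤ C₀)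
    (hcov : ∀ j k : ℕ, 1 ≤ j → 1 ≤ k → j ≠ k →
      ‖∫ ω, (Z j ω - β) * star (Z k ω - β) ∂ℙ‖ ≤ C₀ * |(j : ℝ) - (k : ℝ)| ^ (-p)) :
    ∃ C > 0, ∀ N : ℕ, 1 ≤ N →
      ∫ ω, ‖(N : ℂ)⁻¹ * (∑ j ∈ Finset.Icc 1 N, Z j ω) - β‖ ^ 2 ∂ℙ
        ≤ C * (N : ℝ) ^ (-(1 / 2) : ℝ) :=
  variance_of_average_decay_general β C₀ p hC₀ hp Z hmem hvar hcov
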